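/- arXiv:1610.03154 — 3 statements merged into one kernel-verified Lean document; each statement's English description precedes it below -/
import Mathlib

section
/- Let A = [[A_ff, A_fc],[A_cf, A_cc]] be SPD. Among all interpolation operators of the form P = [W; I], the operator P_ideal = [−A_ff⁻¹A_fc; I] minimizes the measure μ(P) = max over nonzero u of ‖u − P u_c‖² / ⟨A u, u⟩, where u_c is the restriction of u to C-points. -/
open Matrix

/-! For `u ≠ 0` let `e := u - P_ideal u_c`. Its C-part vanishes, and `u - e = P_ideal u_c` is
`A`-orthogonal to every vector with vanishing C-part, since `A P_ideal = [0; S]` with `S` the Schur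
complement. Hence `⟨A e, e⟩ ≤ ⟨A u, u⟩`. On the other hand every `P` reproduces `e` as its own
interpolation error, because `e_c = 0`, so the ratio of `P_ideal` at `u` is at most the ratio of
`P` at `e`, which is at most `μ(P)`. -/

lemma bddAbove_range_of_continuousOn_of_smul_invariant {E : Type*} [NormedAddCommGroup E]
    [NormedSpace ℝ E] [ProperSpace E] {g : E → ℝ} (hg : ContinuousOn g {0}ᶜ)
    (hsmul : ∀ (t : ℝ) (u : E), t ≠ 0 → g (t • u) = g u) :
    BddAbove (Set.range fun u : {u : E // u ≠ 0} => g u) := by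
  refine ((isCompact_sphere (0 : E) 1).bddAbove_image
    (hg.mono fun u hu => Metric.ne_of_mem_sphere hu one_ne_zero)).mono ?_
  rintro _ ⟨⟨u, hu⟩, rfl⟩
  refine ⟨‖u‖⁻¹ • u, by simpa using norm_smul_inv_norm (𝕜 := ℝ) hu, ?_⟩
  exact hsmul _ u (inv_ne_zero (norm_ne_zero_iff.mpr hu))

namespace Matrix

variable {f c : Type*} [Fintype c]

def interpError (P : Matrix (f ⊕ c) c ℝ) (u : f ⊕ c → ℝ) : f ⊕ c → ℝ :=
  u - P *ᵥ fun j => u (Sum.inr j)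

lemma interpError_smul (P : Matrix (f ⊕ c) c ℝ) (t : ℝ) (u : f ⊕ c → ℝ) :
    interpError P (t • u) = t • interpError P u := by
  rw [interpError, interpError, smul_sub, ← mulVec_smul]
  rfl

lemma interpError_of_inr_eq_zero (P : Matrix (f ⊕ c) c ℝ) {u : f ⊕ c → ℝ}
    (hu : ∀ j, u (Sum.inr j) = 0) : interpError P u = u := by
  rw [interpError, show (fun j => u (Sum.inr j)) = 0 from funext hu, mulVec_zero, sub_zero]

lemma interpError_fromRows_one_inr [DecidableEq c] (W : Matrix f c ℝ) (u : f ⊕ c → ℝ) (j : c) :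
    interpError (fromRows W 1) u (Sum.inr j) = 0 := by
  simp [interpError]

variable [Fintype f]

noncomputable def muRatio (A : Matrix (f ⊕ c) (f ⊕ c) ℝ) (P : Matrix (f ⊕ c) c ℝ)
    (u : f ⊕ c → ℝ) : ℝ :=
  (interpError P u ⬝ᵥ interpError P u) / (A *ᵥ u ⬝ᵥ u)

lemma muRatio_smul (A : Matrix (f ⊕ c) (f ⊕ c) ℝ) (P : Matrix (f ⊕ c) c ℝ) {t : ℝ} (ht : t ≠ 0)
    (u : f ⊕ c → ℝ) : muRatio A P (t • u) = muRatio A P u := by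
  simp only [muRatio, interpError_smul, mulVec_smul, smul_dotProduct, dotProduct_smul,
    smul_eq_mul, ← mul_assoc]
  exact mul_div_mul_left _ _ (mul_ne_zero ht ht)

lemma muRatio_nonneg {A : Matrix (f ⊕ c) (f ⊕ c) ℝ} (hA : A.PosSemidef)
    (P : Matrix (f ⊕ c) c ℝ) (u : f ⊕ c → ℝ) : 0 ≤ muRatio A P u := by
  refine div_nonneg (dotProduct_self_star_nonneg _) ?_
  rw [dotProduct_comm]
  exact hA.dotProduct_mulVec_nonneg u

lemma continuousOn_muRatio {A : Matrix (f ⊕ c) (f ⊕ c) ℝ} (hA : A.PosDef)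
    (P : Matrix (f ⊕ c) c ℝ) : ContinuousOn (muRatio A P) {0}ᶜ := by
  refine ContinuousOn.div (Continuous.continuousOn ?_) (Continuous.continuousOn ?_) fun u hu => ?_
  · unfold interpError; fun_prop
  · fun_prop
  · rw [dotProduct_comm]
    exact (hA.dotProduct_mulVec_pos hu).ne'

-- A real `⨆` of an unbounded family is `0`; the ratio is bounded because it is scale invariant.
lemma muRatio_le_iSup {A : Matrix (f ⊕ c) (f ⊕ c) ℝ} (hA : A.PosDef)
    (P : Matrix (f ⊕ c) c ℝ) (u : f ⊕ c → ℝ) :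
    muRatio A P u ≤ ⨆ v : {v : f ⊕ c → ℝ // v ≠ 0}, muRatio A P v := by
  obtain rfl | hu := eq_or_ne u 0
  · rw [show muRatio A P 0 = 0 by simp [muRatio]]
    exact Real.iSup_nonneg fun v => muRatio_nonneg hA.posSemidef P v.1
  · exact le_ciSup (bddAbove_range_of_continuousOn_of_smul_invariant (continuousOn_muRatio hA P)
      fun t v ht => muRatio_smul A P ht v) ⟨u, hu⟩

lemma dotProduct_eq_zero_of_inl_of_inr {R : Type*} [NonUnitalNonAssocSemiring R]
    {x y : f ⊕ c → R} (hx : ∀ i, x (Sum.inl i) = 0) (hy : ∀ j, y (Sum.inr j) = 0) :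
    x ⬝ᵥ y = 0 := by
  simp [dotProduct, Fintype.sum_sum_type, hx, hy]

lemma PosSemidef.mulVec_dotProduct_le_add {n : Type*} [Fintype n] {A : Matrix n n ℝ}
    (hA : A.PosSemidef) {x y : n → ℝ} (hxy : A *ᵥ y ⬝ᵥ x = 0) :
    A *ᵥ x ⬝ᵥ x ≤ A *ᵥ (x + y) ⬝ᵥ (x + y) := by
  have hyx : A *ᵥ x ⬝ᵥ y = 0 := by
    rw [dotProduct_comm, dotProduct_mulVec, ← mulVec_transpose,
      ← conjTranspose_eq_transpose_of_trivial, hA.1, hxy]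
  have hyy : 0 ≤ A *ᵥ y ⬝ᵥ y := by
    rw [dotProduct_comm]; exact hA.dotProduct_mulVec_nonneg y
  simp only [mulVec_add, add_dotProduct, dotProduct_add, hxy, hyx]
  linarith

variable [DecidableEq f] [DecidableEq c]

noncomputable def idealInterp (Aff : Matrix f f ℝ) (Afc : Matrix f c ℝ) : Matrix (f ⊕ c) c ℝ :=
  fromRows (-(Aff⁻¹ * Afc)) 1

lemma fromBlocks_mul_idealInterp {Aff : Matrix f f ℝ} (hAff : IsUnit Aff.det) (Afc : Matrix f c ℝ)
    (Acf : Matrix c f ℝ) (Acc : Matrix c c ℝ) :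
    fromBlocks Aff Afc Acf Acc * idealInterp Aff Afc = fromRows 0 (Acc - Acf * (Aff⁻¹ * Afc)) := by
  rw [idealInterp, fromBlocks_mul_fromRows, Matrix.mul_neg, ← Matrix.mul_assoc,
    mul_nonsing_inv _ hAff, Matrix.one_mul, Matrix.mul_one, Matrix.mul_one, Matrix.mul_neg,
    neg_add_cancel, neg_add_eq_sub]

lemma muRatio_idealInterp_le {Aff : Matrix f f ℝ} {Afc : Matrix f c ℝ} {Acf : Matrix c f ℝ}
    {Acc : Matrix c c ℝ} (hA : (fromBlocks Aff Afc Acf Acc).PosDef) (hAff : IsUnit Aff.det)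
    (P : Matrix (f ⊕ c) c ℝ) (u : f ⊕ c → ℝ) :
    muRatio (fromBlocks Aff Afc Acf Acc) (idealInterp Aff Afc) u ≤
      muRatio (fromBlocks Aff Afc Acf Acc) P (interpError (idealInterp Aff Afc) u) := by
  set A := fromBlocks Aff Afc Acf Acc
  set e := interpError (idealInterp Aff Afc) u
  have he : ∀ j, e (Sum.inr j) = 0 := interpError_fromRows_one_inr _ u
  have horth : A *ᵥ (idealInterp Aff Afc *ᵥ fun j => u (Sum.inr j)) ⬝ᵥ e = 0 :=
    dotProduct_eq_zero_of_inl_of_inr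
      (fun i => by rw [mulVec_mulVec, fromBlocks_mul_idealInterp hAff]; simp) he
  have hsplit : e + idealInterp Aff Afc *ᵥ (fun j => u (Sum.inr j)) = u := sub_add_cancel _ _
  have henergy : A *ᵥ e ⬝ᵥ e ≤ A *ᵥ u ⬝ᵥ u :=
    hsplit ▸ hA.posSemidef.mulVec_dotProduct_le_add horth
  change e ⬝ᵥ e / (A *ᵥ u ⬝ᵥ u) ≤ muRatio A P e
  rw [muRatio, interpError_of_inr_eq_zero P he]
  obtain he0 | he0 := eq_or_ne e 0
  · simp [he0]
  · refine div_le_div_of_nonneg_left (dotProduct_self_star_nonneg e) ?_ henergy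
    rw [dotProduct_comm]
    exact hA.dotProduct_mulVec_pos he0

end Matrix

/-- ideal interpolation minimizes μ(P) over CF-form interpolations. -/
theorem ideal_interp_minimizes_mu (nf nc : ℕ)
    (Aff : Matrix (Fin nf) (Fin nf) ℝ) (Afc : Matrix (Fin nf) (Fin nc) ℝ)
    (Acf : Matrix (Fin nc) (Fin nf) ℝ) (Acc : Matrix (Fin nc) (Fin nc) ℝ)
    (hA : (Matrix.fromBlocks Aff Afc Acf Acc).PosDef)
    (hAff : IsUnit Aff.det)
    -- μ(P) as a supremum over nonzero fine-grid vectors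
    (mu : Matrix (Fin nf ⊕ Fin nc) (Fin nc) ℝ → ℝ)
    (hmu : ∀ P, mu P = ⨆ u : {u : Fin nf ⊕ Fin nc → ℝ // u ≠ 0},
        ((u.1 - P.mulVec (fun j => u.1 (Sum.inr j))) ⬝ᵥ (u.1 - P.mulVec (fun j => u.1 (Sum.inr j)))) /
          (((Matrix.fromBlocks Aff Afc Acf Acc).mulVec u.1) ⬝ᵥ u.1)) :
    ∀ W : Matrix (Fin nf) (Fin nc) ℝ,
      mu (Matrix.fromRows (-(Aff⁻¹ * Afc)) (1 : Matrix (Fin nc) (Fin nc) ℝ)) ≤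
        mu (Matrix.fromRows W (1 : Matrix (Fin nc) (Fin nc) ℝ)) := by
  intro W
  have hmu' : ∀ P, mu P = ⨆ u : {u : Fin nf ⊕ Fin nc → ℝ // u ≠ 0},
      muRatio (fromBlocks Aff Afc Acf Acc) P u.1 := hmu
  rw [hmu', hmu']
  refine Real.iSup_le (fun u => ?_) (Real.iSup_nonneg fun u => muRatio_nonneg hA.posSemidef _ _)
  exact (muRatio_idealInterp_le hA hAff _ u.1).trans (muRatio_le_iSup hA _ _)
end

section
/- Let A be SPD, N a diagonal 0-1 projection matrix on ℝ^{n_f}, and suppose w* solves N A_ff N w* = −N A_fc e_ℓ with N w* = w*. Then w* minimizes both w ↦ ⟨A_ff w, w⟩ + 2⟨A_fc e_ℓ, w⟩ and w ↦ ⟨A_ff(w + A_ff⁻¹A_fc e_ℓ), w + A_ff⁻¹A_fc e_ℓ⟩ over {w : N w = w}; i.e., minimizing the energy of a column of P subject to a sparsity pattern is equivalent to minimizing the A_ff-norm distance of that column to the ideal-interpolation column subject to the same pattern. -/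
/-!
The energy `J w = ⟪A w, w⟫ + 2⟪b, w⟫` of a symmetric positive semidefinite `A` satisfies
`J (x + u) = J x + 2⟪A x + b, u⟫ + ⟪A u, u⟫`. The patterned normal equation says that the
residual `A w⋆ + b` is killed by the diagonal (so symmetric) `N`, hence is orthogonal to every
admissible direction `w - w⋆`, so `w⋆` minimizes `J` on `{w : N w = w}`. Completing the square,
`⟪A (w + A⁻¹ b), w + A⁻¹ b⟫ = J w + ⟪A⁻¹ b, b⟫`, so the second functional has the
same minimizers.
-/

open Matrix

namespace Matrix

variable {n R : Type*} [Fintype n]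

section CommRing

variable [CommRing R]

def quadEnergy (A : Matrix n n R) (b w : n → R) : R :=
  w ⬝ᵥ A *ᵥ w + 2 * (b ⬝ᵥ w)

variable {A : Matrix n n R}

theorem IsSymm.dotProduct_mulVec_comm (hA : A.IsSymm) (x y : n → R) :
    x ⬝ᵥ A *ᵥ y = y ⬝ᵥ A *ᵥ x := by
  simpa only [hA.eq] using dotProduct_transpose_mulVec A x y

theorem IsSymm.dotProduct_eq_zero_of_mulVec_eq_zero_of_mulVec_eq_self (hA : A.IsSymm)
    {r u : n → R} (hr : A *ᵥ r = 0) (hu : A *ᵥ u = u) : r ⬝ᵥ u = 0 := by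
  rw [← hu, hA.dotProduct_mulVec_comm, hr, dotProduct_zero]

theorem IsSymm.quadEnergy_add (hA : A.IsSymm) (b x u : n → R) :
    quadEnergy A b (x + u) =
      quadEnergy A b x + 2 * ((A *ᵥ x + b) ⬝ᵥ u) + u ⬝ᵥ A *ᵥ u := by
  simp only [quadEnergy, mulVec_add, dotProduct_add, add_dotProduct]
  rw [dotProduct_comm (A *ᵥ x) u, hA.dotProduct_mulVec_comm x u]
  ring

theorem IsSymm.dotProduct_mulVec_add_inv_mulVec [DecidableEq n] (hA : A.IsSymm)
    (hdet : IsUnit A.det) (b x : n → R) :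
    (x + A⁻¹ *ᵥ b) ⬝ᵥ A *ᵥ (x + A⁻¹ *ᵥ b) =
      quadEnergy A b x + (A⁻¹ *ᵥ b) ⬝ᵥ b := by
  have hb : A *ᵥ (A⁻¹ *ᵥ b) = b := by
    rw [mulVec_mulVec, mul_nonsing_inv A hdet, one_mulVec]
  have hcx : (A⁻¹ *ᵥ b) ⬝ᵥ A *ᵥ x = b ⬝ᵥ x := by
    rw [hA.dotProduct_mulVec_comm, hb, dotProduct_comm]
  simp only [quadEnergy, mulVec_add, dotProduct_add, add_dotProduct, hb, hcx]
  rw [dotProduct_comm x b]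
  ring

end CommRing

theorem PosSemidef.quadEnergy_le_of_dotProduct_eq_zero {A : Matrix n n ℝ} (hA : A.PosSemidef)
    {b x w : n → ℝ} (horth : (A *ᵥ x + b) ⬝ᵥ (w - x) = 0) :
    quadEnergy A b x ≤ quadEnergy A b w := by
  have hsymm : A.IsSymm := hA.isHermitian
  have hexpand := hsymm.quadEnergy_add b x (w - x)
  rw [add_sub_cancel, horth, mul_zero, add_zero] at hexpand
  rw [hexpand]
  exact le_add_of_nonneg_right (hA.dotProduct_mulVec_nonneg _)

end Matrix

theorem normal_eq_sol_minimizes_both_general (nf nc : ℕ)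
    (Aff : Matrix (Fin nf) (Fin nf) ℝ) (Afc : Matrix (Fin nf) (Fin nc) ℝ)
    (Acf : Matrix (Fin nc) (Fin nf) ℝ) (Acc : Matrix (Fin nc) (Fin nc) ℝ)
    (hA : (Matrix.fromBlocks Aff Afc Acf Acc).PosDef)
    (d : Fin nf → ℝ)
    (N : Matrix (Fin nf) (Fin nf) ℝ) (hN : N = Matrix.diagonal d)
    (ℓ : Fin nc)
    (wstar : Fin nf → ℝ) (hfix : N.mulVec wstar = wstar)
    (hsol : N.mulVec (Aff.mulVec (N.mulVec wstar)) = -(N.mulVec (Afc.mulVec (Pi.single ℓ 1)))) :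
    ∀ w : Fin nf → ℝ, N.mulVec w = w →
      (wstar ⬝ᵥ Aff.mulVec wstar + 2 * ((Afc.mulVec (Pi.single ℓ 1)) ⬝ᵥ wstar) ≤
        w ⬝ᵥ Aff.mulVec w + 2 * ((Afc.mulVec (Pi.single ℓ 1)) ⬝ᵥ w)) ∧
      ((wstar + Aff⁻¹.mulVec (Afc.mulVec (Pi.single ℓ 1))) ⬝ᵥ
          Aff.mulVec (wstar + Aff⁻¹.mulVec (Afc.mulVec (Pi.single ℓ 1))) ≤
        (w + Aff⁻¹.mulVec (Afc.mulVec (Pi.single ℓ 1))) ⬝ᵥ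
          Aff.mulVec (w + Aff⁻¹.mulVec (Afc.mulVec (Pi.single ℓ 1)))) := by
  intro w hw
  set g := Afc *ᵥ Pi.single ℓ 1
  have hAff : Aff.PosDef := hA.submatrix Sum.inl_injective
  have hAffsymm : Aff.IsSymm := hAff.isHermitian
  have hNsymm : N.IsSymm := hN ▸ isSymm_diagonal d
  rw [hfix] at hsol
  have hres : N *ᵥ (Aff *ᵥ wstar + g) = 0 := by
    rw [mulVec_add, hsol, neg_add_cancel]
  have horth : (Aff *ᵥ wstar + g) ⬝ᵥ (w - wstar) = 0 :=
    hNsymm.dotProduct_eq_zero_of_mulVec_eq_zero_of_mulVec_eq_self hres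
      (by rw [mulVec_sub, hw, hfix])
  have hmin : quadEnergy Aff g wstar ≤ quadEnergy Aff g w :=
    hAff.posSemidef.quadEnergy_le_of_dotProduct_eq_zero horth
  have hdet : IsUnit Aff.det := hAff.det_pos.ne'.isUnit
  refine ⟨hmin, ?_⟩
  rw [hAffsymm.dotProduct_mulVec_add_inv_mulVec hdet,
    hAffsymm.dotProduct_mulVec_add_inv_mulVec hdet]
  exact add_le_add_left hmin _

/-- a solution of the patterned normal equation minimizes both the
column energy and the A_ff-distance to the ideal-interpolation column. -/
theorem normal_eq_sol_minimizes_both (nf nc : ℕ)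
    (Aff : Matrix (Fin nf) (Fin nf) ℝ) (Afc : Matrix (Fin nf) (Fin nc) ℝ)
    (Acf : Matrix (Fin nc) (Fin nf) ℝ) (Acc : Matrix (Fin nc) (Fin nc) ℝ)
    (hA : (Matrix.fromBlocks Aff Afc Acf Acc).PosDef)
    (d : Fin nf → ℝ) (hd : ∀ i, d i = 0 ∨ d i = 1)
    (N : Matrix (Fin nf) (Fin nf) ℝ) (hN : N = Matrix.diagonal d)
    (ℓ : Fin nc)
    (wstar : Fin nf → ℝ) (hfix : N.mulVec wstar = wstar)
    (hsol : N.mulVec (Aff.mulVec (N.mulVec wstar)) = -(N.mulVec (Afc.mulVec (Pi.single ℓ 1)))) :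
    ∀ w : Fin nf → ℝ, N.mulVec w = w →
      (wstar ⬝ᵥ Aff.mulVec wstar + 2 * ((Afc.mulVec (Pi.single ℓ 1)) ⬝ᵥ wstar) ≤
        w ⬝ᵥ Aff.mulVec w + 2 * ((Afc.mulVec (Pi.single ℓ 1)) ⬝ᵥ w)) ∧
      ((wstar + Aff⁻¹.mulVec (Afc.mulVec (Pi.single ℓ 1))) ⬝ᵥ
          Aff.mulVec (wstar + Aff⁻¹.mulVec (Afc.mulVec (Pi.single ℓ 1))) ≤
        (w + Aff⁻¹.mulVec (Afc.mulVec (Pi.single ℓ 1))) ⬝ᵥ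
          Aff.mulVec (w + Aff⁻¹.mulVec (Afc.mulVec (Pi.single ℓ 1)))) :=
  normal_eq_sol_minimizes_both_general nf nc Aff Afc Acf Acc hA d N hN ℓ wstar hfix hsol
end

section
/- Let A = [[A_ff, A_fc],[A_cf, A_cc]] be SPD. The optimal CF-form interpolation with respect to the strong measure μ̂(P) = max_{u≠0} ‖u − P u_c‖_A²/‖A u‖² is P = [−(A_ff² + A_fc A_cf)⁻¹(A_ff A_fc + A_fc A_cc); I], i.e., it equals ideal interpolation applied to the matrix A²: since A² = [[A_ff² + A_fc A_cf, A_ff A_fc + A_fc A_cc],[·,·]], the F-block of P is −(A²)_ff⁻¹(A²)_fc. -/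
open Matrix

namespace IdealASq

variable {m n : Type*} [Fintype m] [Fintype n]

lemma dot_self_nonneg (v : m → ℝ) : 0 ≤ v ⬝ᵥ v :=
  Finset.sum_nonneg fun _ _ => mul_self_nonneg _

lemma abs_mul_le_dot (v : m → ℝ) (i j : m) : |v i| * |v j| ≤ v ⬝ᵥ v := by
  have hi : v i * v i ≤ v ⬝ᵥ v :=
    Finset.single_le_sum (f := fun k => v k * v k) (fun k _ => mul_self_nonneg _)
      (Finset.mem_univ i)
  have hj : v j * v j ≤ v ⬝ᵥ v :=
    Finset.single_le_sum (f := fun k => v k * v k) (fun k _ => mul_self_nonneg _)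
      (Finset.mem_univ j)
  nlinarith [sq_nonneg (|v i| - |v j|), sq_abs (v i), sq_abs (v j), abs_nonneg (v i),
    abs_nonneg (v j)]

lemma quad_le (M : Matrix m m ℝ) (v : m → ℝ) :
    (M *ᵥ v) ⬝ᵥ v ≤ (∑ i, ∑ j, |M i j|) * (v ⬝ᵥ v) := by
  have h : (M *ᵥ v) ⬝ᵥ v = ∑ i, ∑ j, M i j * v j * v i := by
    simp [mulVec, dotProduct, Finset.sum_mul]
  rw [h, Finset.sum_mul]
  refine Finset.sum_le_sum fun i _ => ?_
  rw [Finset.sum_mul]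
  refine Finset.sum_le_sum fun j _ => ?_
  calc M i j * v j * v i ≤ |M i j * v j * v i| := le_abs_self _
    _ = |M i j| * (|v j| * |v i|) := by rw [abs_mul, abs_mul]; ring
    _ ≤ |M i j| * (v ⬝ᵥ v) := by
        refine mul_le_mul_of_nonneg_left ?_ (abs_nonneg _)
        rw [mul_comm]; exact abs_mul_le_dot v i j

lemma dot_mulVec_mulVec {p : Type*} [Fintype p] (M : Matrix m p ℝ) (N : Matrix m n ℝ)
    (x : p → ℝ) (y : n → ℝ) :
    (M *ᵥ x) ⬝ᵥ (N *ᵥ y) = ((Nᵀ * M) *ᵥ x) ⬝ᵥ y := by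
  rw [dotProduct_mulVec, ← mulVec_transpose, mulVec_mulVec]

lemma symm_swap {M : Matrix m m ℝ} (hM : Mᵀ = M) (x y : m → ℝ) :
    (M *ᵥ x) ⬝ᵥ y = (M *ᵥ y) ⬝ᵥ x := by
  rw [dotProduct_comm, dotProduct_mulVec, ← mulVec_transpose, hM]

end IdealASq

/-- the optimal CF-form interpolation for the strong measure μ̂ is
ideal interpolation applied to A²: its F-block is −((A²)_ff)⁻¹(A²)_fc, where
(A²)_ff = A_ff² + A_fc A_cf and (A²)_fc = A_ff A_fc + A_fc A_cc. -/
theorem ideal_for_A_sq_minimizes_muhat (nf nc : ℕ)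
    (Aff : Matrix (Fin nf) (Fin nf) ℝ) (Afc : Matrix (Fin nf) (Fin nc) ℝ)
    (Acf : Matrix (Fin nc) (Fin nf) ℝ) (Acc : Matrix (Fin nc) (Fin nc) ℝ)
    (A : Matrix (Fin nf ⊕ Fin nc) (Fin nf ⊕ Fin nc) ℝ)
    (hAdef : A = Matrix.fromBlocks Aff Afc Acf Acc)
    (hA : A.PosDef)
    -- the strong measure μ̂ over CF-form interpolations with F-block W
    (muhat : Matrix (Fin nf) (Fin nc) ℝ → ℝ)
    (hmuhat : ∀ W, muhat W = ⨆ u : {u : Fin nf ⊕ Fin nc → ℝ // u ≠ 0},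
      ((A.mulVec (u.1 - (Matrix.fromRows W (1 : Matrix (Fin nc) (Fin nc) ℝ)).mulVec
            (fun j => u.1 (Sum.inr j)))) ⬝ᵥ
          (u.1 - (Matrix.fromRows W (1 : Matrix (Fin nc) (Fin nc) ℝ)).mulVec
            (fun j => u.1 (Sum.inr j)))) /
        ((A.mulVec u.1) ⬝ᵥ (A.mulVec u.1)))
    (Wopt : Matrix (Fin nf) (Fin nc) ℝ)
    (hWopt : Wopt = -((Aff * Aff + Afc * Acf)⁻¹ * (Aff * Afc + Afc * Acc))) :
    (∀ W : Matrix (Fin nf) (Fin nc) ℝ, muhat Wopt ≤ muhat W) ∧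
    Wopt = -(((A * A).toBlocks₁₁)⁻¹ * (A * A).toBlocks₁₂) := by
  classical
  have hA2 : A * A = Matrix.fromBlocks (Aff * Aff + Afc * Acf) (Aff * Afc + Afc * Acc)
      (Acf * Aff + Acc * Acf) (Acf * Afc + Acc * Acc) := by
    rw [hAdef, Matrix.fromBlocks_multiply]
  have hblock : Wopt = -(((A * A).toBlocks₁₁)⁻¹ * (A * A).toBlocks₁₂) := by
    rw [hA2, Matrix.toBlocks_fromBlocks₁₁, Matrix.toBlocks_fromBlocks₁₂, hWopt]
  refine ⟨?_, hblock⟩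
  intro W
  set Bff := Aff * Aff + Afc * Acf with hBffdef
  set Bfc := Aff * Afc + Afc * Acc with hBfcdef
  set Bcf := Acf * Aff + Acc * Acf with hBcfdef
  set Bcc := Acf * Afc + Acc * Acc with hBccdef
  have hAsym : Aᵀ = A := by
    rw [← Matrix.conjTranspose_eq_transpose_of_trivial]; exact hA.1
  have hA2T : (A * A)ᵀ = A * A := by rw [Matrix.transpose_mul, hAsym]
  -- A *ᵥ u ≠ 0 for u ≠ 0
  have hAu : ∀ u : Fin nf ⊕ Fin nc → ℝ, u ≠ 0 → A *ᵥ u ≠ 0 := by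
    intro u hu h0
    have h := hA.dotProduct_mulVec_pos hu
    rw [h0] at h
    simp at h
  have hq : ∀ u : Fin nf ⊕ Fin nc → ℝ, ((A * A) *ᵥ u) ⬝ᵥ u = (A *ᵥ u) ⬝ᵥ (A *ᵥ u) := by
    intro u
    rw [← Matrix.mulVec_mulVec]
    exact IdealASq.symm_swap hAsym (A *ᵥ u) u
  have hD : ∀ u : Fin nf ⊕ Fin nc → ℝ, u ≠ 0 → 0 < (A *ᵥ u) ⬝ᵥ (A *ᵥ u) := by
    intro u hu
    refine lt_of_le_of_ne (IdealASq.dot_self_nonneg _) (Ne.symm fun h => ?_)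
    exact hAu u hu (dotProduct_self_eq_zero.mp h)
  have hNum : ∀ e : Fin nf ⊕ Fin nc → ℝ, 0 ≤ (A *ᵥ e) ⬝ᵥ e := by
    intro e
    have h := hA.posSemidef.dotProduct_mulVec_nonneg e
    rw [show star e = e from funext fun i => star_trivial _] at h
    rw [dotProduct_comm]
    exact h
  -- restriction matrix
  set Rm : Matrix (Fin nc) (Fin nf ⊕ Fin nc) ℝ := Matrix.fromCols 0 1 with hRmdef
  have hRu : ∀ u : Fin nf ⊕ Fin nc → ℝ, Rm *ᵥ u = fun j => u (Sum.inr j) := by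
    intro u
    have h : u = Sum.elim (u ∘ Sum.inl) (u ∘ Sum.inr) := by funext x; cases x <;> rfl
    calc Rm *ᵥ u = Rm *ᵥ Sum.elim (u ∘ Sum.inl) (u ∘ Sum.inr) := by rw [← h]
      _ = 0 *ᵥ (u ∘ Sum.inl) + 1 *ᵥ (u ∘ Sum.inr) :=
          Matrix.fromCols_mulVec_sumElim _ _ _ _
      _ = fun j => u (Sum.inr j) := by
          rw [Matrix.zero_mulVec, Matrix.one_mulVec, zero_add]; rfl
  have herr : ∀ (V : Matrix (Fin nf) (Fin nc) ℝ) (u : Fin nf ⊕ Fin nc → ℝ),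
      u - (Matrix.fromRows V (1 : Matrix (Fin nc) (Fin nc) ℝ)) *ᵥ (fun j => u (Sum.inr j)) =
        ((1 : Matrix (Fin nf ⊕ Fin nc) (Fin nf ⊕ Fin nc) ℝ) - Matrix.fromRows V 1 * Rm) *ᵥ u := by
    intro V u
    rw [Matrix.sub_mulVec, Matrix.one_mulVec, ← Matrix.mulVec_mulVec, hRu]
  -- boundedness of each family of ratios
  have hbdd : ∀ V : Matrix (Fin nf) (Fin nc) ℝ,
      BddAbove (Set.range fun u : {u : Fin nf ⊕ Fin nc → ℝ // u ≠ 0} =>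
        ((A.mulVec (u.1 - (Matrix.fromRows V (1 : Matrix (Fin nc) (Fin nc) ℝ)).mulVec
            (fun j => u.1 (Sum.inr j)))) ⬝ᵥ
          (u.1 - (Matrix.fromRows V (1 : Matrix (Fin nc) (Fin nc) ℝ)).mulVec
            (fun j => u.1 (Sum.inr j)))) /
        ((A.mulVec u.1) ⬝ᵥ (A.mulVec u.1))) := by
    intro V
    set Q := (1 : Matrix (Fin nf ⊕ Fin nc) (Fin nf ⊕ Fin nc) ℝ) - Matrix.fromRows V 1 * Rm
      with hQdef
    set c1 := ∑ i, ∑ j, |(Qᵀ * (A * Q)) i j| with hc1def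
    set c2 := ∑ i, ∑ j, |((A⁻¹)ᵀ * A⁻¹) i j| with hc2def
    have hc1nn : 0 ≤ c1 :=
      Finset.sum_nonneg fun _ _ => Finset.sum_nonneg fun _ _ => abs_nonneg _
    refine ⟨c1 * c2, ?_⟩
    rintro x ⟨⟨u, hu⟩, rfl⟩
    dsimp only
    rw [herr V u]
    have hDpos := hD u hu
    rw [div_le_iff₀ hDpos]
    have h1 : (A *ᵥ (Q *ᵥ u)) ⬝ᵥ (Q *ᵥ u) ≤ c1 * (u ⬝ᵥ u) := by
      rw [Matrix.mulVec_mulVec, IdealASq.dot_mulVec_mulVec]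
      exact IdealASq.quad_le _ u
    have h2 : u ⬝ᵥ u ≤ c2 * ((A *ᵥ u) ⬝ᵥ (A *ᵥ u)) := by
      have hdet : IsUnit A.det := hA.det_pos.ne'.isUnit
      have hinv : A⁻¹ *ᵥ (A *ᵥ u) = u := by
        rw [Matrix.mulVec_mulVec, Matrix.nonsing_inv_mul _ hdet, Matrix.one_mulVec]
      calc u ⬝ᵥ u = (A⁻¹ *ᵥ (A *ᵥ u)) ⬝ᵥ (A⁻¹ *ᵥ (A *ᵥ u)) := by rw [hinv]
        _ = (((A⁻¹)ᵀ * A⁻¹) *ᵥ (A *ᵥ u)) ⬝ᵥ (A *ᵥ u) :=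
            IdealASq.dot_mulVec_mulVec _ _ _ _
        _ ≤ c2 * ((A *ᵥ u) ⬝ᵥ (A *ᵥ u)) := IdealASq.quad_le _ _
    nlinarith [h1, h2, IdealASq.dot_self_nonneg u]
  -- symmetry of blocks of A²
  have hA2T' : Matrix.fromBlocks Bffᵀ Bcfᵀ Bfcᵀ Bccᵀ = Matrix.fromBlocks Bff Bfc Bcf Bcc := by
    rw [← Matrix.fromBlocks_transpose, ← hA2, hA2T, hA2]
  have hBffT : Bffᵀ = Bff := by
    have h := congrArg Matrix.toBlocks₁₁ hA2T'
    simpa [Matrix.toBlocks_fromBlocks₁₁] using h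
  have hBcfT : Bcfᵀ = Bfc := by
    have h := congrArg Matrix.toBlocks₁₂ hA2T'
    simpa [Matrix.toBlocks_fromBlocks₁₂] using h
  have hBfcT : Bfcᵀ = Bcf := by rw [← hBcfT, Matrix.transpose_transpose]
  -- Bff is positive definite
  have hBffpd : Bff.PosDef := by
    refine Matrix.PosDef.of_dotProduct_mulVec_pos ?_ ?_
    · rw [Matrix.IsHermitian, Matrix.conjTranspose_eq_transpose_of_trivial]; exact hBffT
    · intro x hx
      have hx' : (Sum.elim x 0 : Fin nf ⊕ Fin nc → ℝ) ≠ 0 := by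
        intro h
        apply hx
        funext i
        have := congrFun h (Sum.inl i)
        simpa using this
      have key : ((A * A) *ᵥ Sum.elim x 0) ⬝ᵥ Sum.elim x 0 = (Bff *ᵥ x) ⬝ᵥ x := by
        rw [hA2, Matrix.fromBlocks_mulVec]
        have h1 : ((Sum.elim x 0 : Fin nf ⊕ Fin nc → ℝ) ∘ Sum.inl) = x := rfl
        have h2 : ((Sum.elim x 0 : Fin nf ⊕ Fin nc → ℝ) ∘ Sum.inr) = (0 : Fin nc → ℝ) := rfl
        rw [h1, h2, Matrix.mulVec_zero, Matrix.mulVec_zero, add_zero, add_zero,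
          sumElim_dotProduct_sumElim, dotProduct_zero, add_zero]
      have hpos := hD _ hx'
      rw [← hq, key] at hpos
      rw [show star x = x from funext fun i => star_trivial _, dotProduct_comm]
      exact hpos
  have hdetBff : IsUnit Bff.det := hBffpd.det_pos.ne'.isUnit
  set K := Bff⁻¹ * Bfc with hKdef
  have hBffK : Bff * K = Bfc := by
    rw [hKdef, ← Matrix.mul_assoc, Matrix.mul_nonsing_inv _ hdetBff, Matrix.one_mul]
  have hKB : Kᵀ * Bff = Bcf := by
    calc Kᵀ * Bff = Kᵀ * Bffᵀ := by rw [hBffT]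
      _ = (Bff * K)ᵀ := by rw [← Matrix.transpose_mul]
      _ = Bcf := by rw [hBffK, hBfcT]
  -- main comparison
  rw [hmuhat Wopt, hmuhat W]
  have hGnn : ∀ i : {u : Fin nf ⊕ Fin nc → ℝ // u ≠ 0},
      0 ≤ ((A.mulVec (i.1 - (Matrix.fromRows W (1 : Matrix (Fin nc) (Fin nc) ℝ)).mulVec
            (fun j => i.1 (Sum.inr j)))) ⬝ᵥ
          (i.1 - (Matrix.fromRows W (1 : Matrix (Fin nc) (Fin nc) ℝ)).mulVec
            (fun j => i.1 (Sum.inr j)))) /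
        ((A.mulVec i.1) ⬝ᵥ (A.mulVec i.1)) :=
    fun i => div_nonneg (hNum _) (IdealASq.dot_self_nonneg _)
  have hsup_nn : (0 : ℝ) ≤ ⨆ u : {u : Fin nf ⊕ Fin nc → ℝ // u ≠ 0},
      ((A.mulVec (u.1 - (Matrix.fromRows W (1 : Matrix (Fin nc) (Fin nc) ℝ)).mulVec
            (fun j => u.1 (Sum.inr j)))) ⬝ᵥ
          (u.1 - (Matrix.fromRows W (1 : Matrix (Fin nc) (Fin nc) ℝ)).mulVec
            (fun j => u.1 (Sum.inr j)))) /
        ((A.mulVec u.1) ⬝ᵥ (A.mulVec u.1)) := by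
    by_cases hne : Nonempty {u : Fin nf ⊕ Fin nc → ℝ // u ≠ 0}
    · obtain ⟨i⟩ := hne
      exact le_trans (hGnn i) (le_ciSup (hbdd W) i)
    · haveI : IsEmpty {u : Fin nf ⊕ Fin nc → ℝ // u ≠ 0} := not_nonempty_iff.mp hne
      rw [Real.iSup_of_isEmpty]
  refine Real.iSup_le (fun i => ?_) hsup_nn
  obtain ⟨u, hu⟩ := i
  dsimp only
  set uc : Fin nc → ℝ := fun j => u (Sum.inr j) with hucdef
  set w : Fin nf → ℝ := (fun i => u (Sum.inl i)) + K *ᵥ uc with hwdef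
  have hWoptv : ∀ y : Fin nc → ℝ, Wopt *ᵥ y = -(K *ᵥ y) := by
    intro y
    rw [hWopt, Matrix.neg_mulVec]
  have he : u - (Matrix.fromRows Wopt (1 : Matrix (Fin nc) (Fin nc) ℝ)) *ᵥ uc
      = Sum.elim w 0 := by
    funext x
    rw [Matrix.fromRows_mulVec]
    cases x with
    | inl i =>
        simp only [Pi.sub_apply, Sum.elim_inl, hWoptv, Pi.neg_apply, hwdef, Pi.add_apply]
        ring
    | inr j =>
        simp only [Pi.sub_apply, Sum.elim_inr, Matrix.one_mulVec, Pi.zero_apply]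
        exact sub_self _
  rw [he]
  by_cases hw0 : w = 0
  · rw [hw0, show (Sum.elim (0 : Fin nf → ℝ) (0 : Fin nc → ℝ)) =
      (0 : Fin nf ⊕ Fin nc → ℝ) from funext fun x => by cases x <;> rfl]
    rw [Matrix.mulVec_zero, zero_dotProduct, zero_div]
    exact hsup_nn
  · set u' : Fin nf ⊕ Fin nc → ℝ := Sum.elim w 0 with hu'def
    have hu' : u' ≠ 0 := by
      intro h
      apply hw0
      funext i
      have := congrFun h (Sum.inl i)
      simpa [hu'def] using this
    -- key denominator inequality
    have hz' : u - u' = Sum.elim (-(K *ᵥ uc)) uc := by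
      funext x
      cases x with
      | inl i =>
          simp only [Pi.sub_apply, hu'def, Sum.elim_inl, Pi.neg_apply, hwdef, Pi.add_apply]
          ring
      | inr j =>
          simp only [Pi.sub_apply, hu'def, Sum.elim_inr, Pi.zero_apply, hucdef]
          ring
    have hcross : ((A * A) *ᵥ u') ⬝ᵥ (u - u') = 0 := by
      have hBu' : (A * A) *ᵥ u' = Sum.elim (Bff *ᵥ w) (Bcf *ᵥ w) := by
        rw [hA2, hu'def, Matrix.fromBlocks_mulVec]
        have h1 : ((Sum.elim w 0 : Fin nf ⊕ Fin nc → ℝ) ∘ Sum.inl) = w := rfl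
        have h2 : ((Sum.elim w 0 : Fin nf ⊕ Fin nc → ℝ) ∘ Sum.inr) = (0 : Fin nc → ℝ) := rfl
        rw [h1, h2, Matrix.mulVec_zero, Matrix.mulVec_zero, add_zero, add_zero]
      rw [hBu', hz', sumElim_dotProduct_sumElim, dotProduct_neg,
        IdealASq.dot_mulVec_mulVec, hKB]
      ring
    have hle : (A *ᵥ u') ⬝ᵥ (A *ᵥ u') ≤ (A *ᵥ u) ⬝ᵥ (A *ᵥ u) := by
      rw [← hq, ← hq]
      have hzz : 0 ≤ ((A * A) *ᵥ (u - u')) ⬝ᵥ (u - u') := by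
        rw [hq]; exact IdealASq.dot_self_nonneg _
      have hswap := IdealASq.symm_swap hA2T (u - u') u'
      have hsplit : u = u' + (u - u') := by abel
      calc ((A * A) *ᵥ u') ⬝ᵥ u'
          ≤ ((A * A) *ᵥ u') ⬝ᵥ u' + ((A * A) *ᵥ (u - u')) ⬝ᵥ (u - u') :=
            le_add_of_nonneg_right hzz
        _ = ((A * A) *ᵥ (u' + (u - u'))) ⬝ᵥ (u' + (u - u')) := by
            rw [Matrix.mulVec_add, add_dotProduct, dotProduct_add,
              dotProduct_add, hcross, hswap, hcross]
            ring
        _ = ((A * A) *ᵥ u) ⬝ᵥ u := by rw [← hsplit]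
    refine le_trans ?_ (le_ciSup (hbdd W) ⟨u', hu'⟩)
    dsimp only
    have he' : u' - (Matrix.fromRows W (1 : Matrix (Fin nc) (Fin nc) ℝ)) *ᵥ
        (fun j => u' (Sum.inr j)) = u' := by
      have h0 : (fun j => u' (Sum.inr j)) = (0 : Fin nc → ℝ) := rfl
      rw [h0, Matrix.mulVec_zero, sub_zero]
    rw [he']
    exact div_le_div_of_nonneg_left (hNum u') (hD u' hu') hle
end
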